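/- Let R be a commutative Noetherian local ring, let M and N be finitely generated R-modules, and fix a resolution ⋯ → F_2 → F_1 → F_0 → M → 0 of M by finite free R-modules. Suppose Ext^i_R(M,R) = 0 for all i ≥ 1. Then for all integers u ≥ v ≥ 1 and all j ≥ 1 one has Ext^j_R(Tr Ω^{u−v} M, N) ≅ Ext^{j+v}_R(Tr Ω^{u} M, N). -/

import Mathlib

open CategoryTheory

/-- The `i`-th Ext module `Ext^i_R(X, Y)` of two `R`-modules. -/
noncomputable abbrev extMod (R : Type) [CommRing R] (i : ℕ)
    (X : Type) [AddCommGroup X] [Module R X]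
    (Y : Type) [AddCommGroup Y] [Module R Y] : Type :=
  ((Ext R (ModuleCat R) i).obj (Opposite.op (ModuleCat.of R X))).obj (ModuleCat.of R Y)

/-- A resolution `⋯ → F_2 → F_1 → F_0 → M → 0` of `M` by finite free `R`-modules. -/
structure FiniteFreeResolution (R : Type) [CommRing R]
    (M : Type) [AddCommGroup M] [Module R M] where
  F : ℕ → Type
  [addCommGroup : ∀ n, AddCommGroup (F n)]
  [module : ∀ n, Module R (F n)]
  free : ∀ n, Module.Free R (F n)
  finite : ∀ n, Module.Finite R (F n)
  d : ∀ n, F (n + 1) →ₗ[R] F n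
  ε : F 0 →ₗ[R] M
  surj : Function.Surjective ε
  exact_at_zero : Function.Exact (d 0) ε
  exact_at : ∀ n, Function.Exact (d (n + 1)) (d n)

attribute [instance] FiniteFreeResolution.addCommGroup FiniteFreeResolution.module

/-- `Tr Ω^n M`: the transpose of the `n`-th syzygy of `M` with respect to the given
finite free resolution, i.e. the cokernel of the dual map `F_n^* → F_{n+1}^*`.
(For `n = 0` this is the transpose `Tr M` of `M` itself.) -/
abbrev FiniteFreeResolution.trSyzygy {R : Type} [CommRing R] {M : Type}
    [AddCommGroup M] [Module R M] (res : FiniteFreeResolution R M) (n : ℕ) : Type :=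
  Module.Dual R (res.F (n + 1)) ⧸ LinearMap.range (res.d n).dualMap

/-!
Since `Ext^{≥1}(M, R) = 0`, the dual complex `F_0^* → F_1^* → F_2^* → ⋯` is exact in positive
degrees. Hence `d_{n+1}^*` embeds `Tr Ω^n M = coker d_n^*` into the free module `F_{n+2}^*` with
cokernel `Tr Ω^{n+1} M`, and dimension shifting along `0 → Tr Ω^n M → F_{n+2}^* → Tr Ω^{n+1} M → 0`
gives `Ext^j(Tr Ω^n M, N) ≅ Ext^{j+1}(Tr Ω^{n+1} M, N)` for `j ≥ 1`; iterate `v` times.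
For `Ext` defined through projective resolutions, dimension shifting holds because a projective
resolution of the kernel, spliced onto the projective middle term, resolves the cokernel, and its
`Hom` complex is the one of the kernel shifted by one.
-/

namespace CategoryTheory

variable {C : Type*} [Category C] [Abelian C]

namespace ProjectiveResolution

variable {Z : C} (P : ProjectiveResolution Z)

-- `P.π.f 0`, but with target `Z` rather than `((single₀ C).obj Z).X 0`, so that rewriting works.
noncomputable def ε : P.complex.X 0 ⟶ Z := (ChainComplex.toSingle₀Equiv _ _ P.π).1

@[simp]
lemma d_comp_ε : P.complex.d 1 0 ≫ P.ε = 0 := (ChainComplex.toSingle₀Equiv _ _ P.π).2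

@[simp]
lemma d_comp_ε_assoc {Y : C} (f : Z ⟶ Y) : P.complex.d 1 0 ≫ P.ε ≫ f = 0 := by
  rw [← Category.assoc, d_comp_ε, Limits.zero_comp]

instance : Epi P.ε := inferInstanceAs (Epi (P.π.f 0))

lemma exact_d_ε_comp_of_mono {Y : C} (f : Z ⟶ Y) [Mono f] :
    (ShortComplex.mk (P.complex.d 1 0) (P.ε ≫ f) (by simp)).Exact :=
  (ShortComplex.exact_iff_of_epi_of_isIso_of_mono (S₁ := ShortComplex.mk _ _ P.d_comp_ε)
    (S₂ := ShortComplex.mk (P.complex.d 1 0) (P.ε ≫ f) (by simp)) { τ₁ := 𝟙 _, τ₂ := 𝟙 _, τ₃ := f }).1 P.exact₀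

lemma exact_ε_comp_f {S : ShortComplex C} (hS : S.Exact) (P : ProjectiveResolution S.X₁) :
    (ShortComplex.mk (P.ε ≫ S.f) S.g (by simp)).Exact :=
  (ShortComplex.exact_iff_of_epi_of_isIso_of_mono
    (S₁ := ShortComplex.mk (P.ε ≫ S.f) S.g (by simp)) (S₂ := S) { τ₁ := P.ε, τ₂ := 𝟙 _, τ₃ := 𝟙 _ }).2 hS

noncomputable def ofShortExact {S : ShortComplex C} (hS : S.ShortExact) [Projective S.X₂]
    (P : ProjectiveResolution S.X₁) : ProjectiveResolution S.X₃ where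
  complex := P.complex.augment (P.ε ≫ S.f) (by simp)
  projective
    | 0 => ‹_›
    | n + 1 => P.projective n
  π := (ChainComplex.toSingle₀Equiv _ _).symm ⟨S.g, show (P.ε ≫ S.f) ≫ S.g = 0 by simp⟩
  quasiIso := ⟨fun n => by
    match n with
    | 0 =>
      rw [ChainComplex.quasiIsoAt₀_iff, ShortComplex.quasiIso_iff_of_zeros' _ rfl rfl rfl]
      refine (ShortComplex.exact_and_epi_g_iff_of_iso ?_).2 ⟨exact_ε_comp_f hS.exact P, hS.epi_g⟩
      exact ShortComplex.isoMk (Iso.refl _) (Iso.refl _) (Iso.refl _)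
        ((Category.id_comp _).trans (Category.comp_id _).symm)
        ((Category.id_comp _).trans ((ChainComplex.toSingle₀Equiv_symm_apply_f_zero
          (C := P.complex.augment (P.ε ≫ S.f) (by simp)) _ _).symm.trans (Category.comp_id _).symm))
    | 1 =>
      have := hS.mono_f
      rw [quasiIsoAt_iff_exactAt' _ _ (ChainComplex.exactAt_succ_single_obj _ _),
        HomologicalComplex.exactAt_iff' _ 2 1 0 (by simp) (by simp)]
      exact P.exact_d_ε_comp_of_mono S.f
    | k + 2 =>
      rw [quasiIsoAt_iff_exactAt' _ _ (ChainComplex.exactAt_succ_single_obj _ _),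
        HomologicalComplex.exactAt_iff' _ (k + 3) (k + 2) (k + 1) (by simp) (by simp)]
      exact P.exact_succ k⟩

end ProjectiveResolution

variable (R : Type*) [Ring R] [Linear R C] [EnoughProjectives C]

noncomputable def ShortComplex.ShortExact.extSuccIso {S : ShortComplex C} (hS : S.ShortExact)
    [Projective S.X₂] (Y : C) (n : ℕ) :
    ((Ext R C (n + 1)).obj (.op S.X₁)).obj Y ≅ ((Ext R C (n + 2)).obj (.op S.X₃)).obj Y :=
  let P := projectiveResolution S.X₁
  let K := P.complex.linearYonedaObj R Y
  let L := (ProjectiveResolution.ofShortExact hS P).complex.linearYonedaObj R Y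
  P.isoExt (n + 1) Y ≪≫ K.homologyIsoSc' n (n + 1) (n + 2) (by simp) (by simp) ≪≫
    ShortComplex.homologyMapIso
      (ShortComplex.isoMk (Iso.refl _) (Iso.refl _) (Iso.refl _)
        ((Category.id_comp _).trans (Category.comp_id _).symm)
        ((Category.id_comp _).trans (Category.comp_id _).symm)
        : K.sc' n (n + 1) (n + 2) ≅ L.sc' (n + 1) (n + 2) (n + 3)) ≪≫
    (L.homologyIsoSc' (n + 1) (n + 2) (n + 3) (by simp) (by simp)).symm ≪≫
    ((ProjectiveResolution.ofShortExact hS P).isoExt (n + 2) Y).symm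

end CategoryTheory

namespace FiniteFreeResolution

variable {R : Type} [CommRing R] {M : Type} [AddCommGroup M] [Module R M]
  (res : FiniteFreeResolution R M)

noncomputable def complex : ChainComplex (ModuleCat R) ℕ :=
  ChainComplex.of (fun n => ModuleCat.of R (res.F n)) (fun n => ModuleCat.ofHom (res.d n))
    (fun n => by ext x; exact (res.exact_at n).apply_apply_eq_zero x)

lemma complex_d (n : ℕ) : res.complex.d (n + 1) n = ModuleCat.ofHom (res.d n) :=
  by simp [complex]

noncomputable def projectiveResolution : ProjectiveResolution (ModuleCat.of R M) where
  complex := res.complex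
  projective n := by
    have := res.free n
    exact inferInstanceAs (Projective (ModuleCat.of R (res.F n)))
  π := (ChainComplex.toSingle₀Equiv _ _).symm ⟨ModuleCat.ofHom res.ε, by
    rw [complex_d]; ext x; exact res.exact_at_zero.apply_apply_eq_zero x⟩
  quasiIso := ⟨fun n => by
    match n with
    | 0 =>
      rw [ChainComplex.quasiIsoAt₀_iff, ShortComplex.quasiIso_iff_of_zeros' _ rfl rfl rfl,
        ShortComplex.ShortExact.moduleCat_exact_iff_function_exact, ModuleCat.epi_iff_surjective]
      show Function.Exact (res.complex.d 1 0).hom (ModuleCat.ofHom res.ε).hom ∧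
        Function.Surjective (ModuleCat.ofHom res.ε).hom
      rw [complex_d]
      exact ⟨res.exact_at_zero, res.surj⟩
    | k + 1 =>
      rw [quasiIsoAt_iff_exactAt' _ _ (ChainComplex.exactAt_succ_single_obj _ _),
        HomologicalComplex.exactAt_iff' _ (k + 2) (k + 1) k (by simp) (by simp),
        ShortComplex.ShortExact.moduleCat_exact_iff_function_exact]
      show Function.Exact (res.complex.d (k + 2) (k + 1)).hom (res.complex.d (k + 1) k).hom
      rw [complex_d, complex_d]
      exact res.exact_at k⟩

lemma exact_dualMap_of_subsingleton_ext (n : ℕ) (h : Subsingleton (extMod R (n + 1) M R)) :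
    Function.Exact (res.d n).dualMap (res.d (n + 1)).dualMap := by
  set K := res.projectiveResolution.complex.linearYonedaObj R (ModuleCat.of R R)
  have hK : K.ExactAt (n + 1) := by
    rw [HomologicalComplex.exactAt_iff_isZero_homology]
    exact (ModuleCat.isZero_of_subsingleton _).of_iso (res.projectiveResolution.isoExt _ _).symm
  rw [HomologicalComplex.exactAt_iff' _ n (n + 1) (n + 2) (by simp) (by simp),
    ShortComplex.ShortExact.moduleCat_exact_iff_function_exact] at hK
  simp only [K, projectiveResolution, HomologicalComplex.shortComplexFunctor'_obj_f,
    HomologicalComplex.shortComplexFunctor'_obj_g, ChainComplex.linearYonedaObj_d, complex_d] at hK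
  exact Function.Exact.of_ladder_linearEquiv_of_exact (e₁ := ModuleCat.homLinearEquiv)
    (e₂ := ModuleCat.homLinearEquiv) (e₃ := ModuleCat.homLinearEquiv) rfl rfl hK

lemma dualMap_d_comp_dualMap_d (n : ℕ) :
    (res.d (n + 1)).dualMap ∘ₗ (res.d n).dualMap = 0 := by
  ext f x
  simp [(res.exact_at n).apply_apply_eq_zero]

noncomputable def trSyzygyToDual (n : ℕ) : res.trSyzygy n →ₗ[R] Module.Dual R (res.F (n + 2)) :=
  (LinearMap.range (res.d n).dualMap).liftQ (res.d (n + 1)).dualMap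
    (LinearMap.range_le_ker_iff.2 (res.dualMap_d_comp_dualMap_d n))

lemma exact_trSyzygyToDual_mkQ (n : ℕ) :
    Function.Exact (res.trSyzygyToDual n) (LinearMap.range (res.d (n + 1)).dualMap).mkQ :=
  LinearMap.exact_iff.2 (by rw [Submodule.ker_mkQ, trSyzygyToDual, Submodule.range_liftQ])

lemma injective_trSyzygyToDual (n : ℕ)
    (h : Function.Exact (res.d n).dualMap (res.d (n + 1)).dualMap) :
    Function.Injective (res.trSyzygyToDual n) :=
  LinearMap.ker_eq_bot.1 (Submodule.ker_liftQ_eq_bot _ _ _ h.linearMap_ker_eq.le)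

noncomputable def trSyzygyShortComplex (n : ℕ) : ShortComplex (ModuleCat R) :=
  ModuleCat.shortComplexOfCompEqZero (res.trSyzygyToDual n)
    (LinearMap.range (res.d (n + 1)).dualMap).mkQ
    (res.exact_trSyzygyToDual_mkQ n).linearMap_comp_eq_zero

lemma shortExact_trSyzygyShortComplex (n : ℕ)
    (h : Function.Exact (res.d n).dualMap (res.d (n + 1)).dualMap) :
    (res.trSyzygyShortComplex n).ShortExact :=
  ModuleCat.shortComplex_shortExact _ (res.exact_trSyzygyToDual_mkQ n)
    (res.injective_trSyzygyToDual n h) (Submodule.mkQ_surjective _)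

lemma nonempty_linearEquiv_extMod_trSyzygy_succ (n : ℕ)
    (h : Function.Exact (res.d n).dualMap (res.d (n + 1)).dualMap)
    (N : Type) [AddCommGroup N] [Module R N] (i : ℕ) (hi : 1 ≤ i) :
    Nonempty (extMod R i (res.trSyzygy n) N ≃ₗ[R] extMod R (i + 1) (res.trSyzygy (n + 1)) N) := by
  obtain ⟨m, rfl⟩ := Nat.exists_eq_add_of_le' hi
  have hS := res.shortExact_trSyzygyShortComplex n h
  have := res.free (n + 2)
  have := res.finite (n + 2)
  have : Projective (res.trSyzygyShortComplex n).X₂ :=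
    inferInstanceAs (Projective (ModuleCat.of R (Module.Dual R (res.F (n + 2)))))
  exact ⟨(hS.extSuccIso R (ModuleCat.of R N) m).toLinearEquiv⟩

lemma nonempty_linearEquiv_extMod_trSyzygy_add
    (hext : ∀ i : ℕ, 1 ≤ i → Subsingleton (extMod R i M R))
    (N : Type) [AddCommGroup N] [Module R N] (n i : ℕ) (hi : 1 ≤ i) :
    ∀ v, Nonempty (extMod R i (res.trSyzygy n) N ≃ₗ[R] extMod R (i + v) (res.trSyzygy (n + v)) N)
  | 0 => ⟨LinearEquiv.refl _ _⟩
  | v + 1 =>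
    let ⟨e⟩ := nonempty_linearEquiv_extMod_trSyzygy_add hext N n i hi v
    let ⟨e'⟩ := res.nonempty_linearEquiv_extMod_trSyzygy_succ (n + v)
      (res.exact_dualMap_of_subsingleton_ext (n + v) (hext _ (Nat.le_add_left 1 _))) N (i + v)
      (by omega)
    ⟨e.trans e'⟩

end FiniteFreeResolution

theorem ext_trSyzygy_shift_iso_of_ext_vanishing_general
    (R : Type) [CommRing R]
    (M N : Type) [AddCommGroup M] [Module R M] [AddCommGroup N] [Module R N]
    (res : FiniteFreeResolution R M)
    (hext : ∀ i : ℕ, 1 ≤ i → Subsingleton (extMod R i M R)) :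
    ∀ u v j : ℕ, 1 ≤ v → v ≤ u → 1 ≤ j →
      Nonempty (extMod R j (res.trSyzygy (u - v)) N ≃ₗ[R]
        extMod R (j + v) (res.trSyzygy u) N) := by
  intro u v j _ hvu hj
  have h := res.nonempty_linearEquiv_extMod_trSyzygy_add hext N (u - v) j hj v
  rwa [Nat.sub_add_cancel hvu] at h

/-- If `Ext^i_R(M, R) = 0` for all `i ≥ 1`, then for all integers `u ≥ v ≥ 1` and all
`j ≥ 1` one has `Ext^j_R(Tr Ω^{u-v} M, N) ≅ Ext^{j+v}_R(Tr Ω^u M, N)`. -/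
theorem ext_trSyzygy_shift_iso_of_ext_vanishing
    (R : Type) [CommRing R] [IsNoetherianRing R] [IsLocalRing R]
    (M N : Type) [AddCommGroup M] [Module R M] [AddCommGroup N] [Module R N]
    [Module.Finite R M] [Module.Finite R N]
    (res : FiniteFreeResolution R M)
    (hext : ∀ i : ℕ, 1 ≤ i → Subsingleton (extMod R i M R)) :
    ∀ u v j : ℕ, 1 ≤ v → v ≤ u → 1 ≤ j →
      Nonempty (extMod R j (res.trSyzygy (u - v)) N ≃ₗ[R]
        extMod R (j + v) (res.trSyzygy u) N) :=
  ext_trSyzygy_shift_iso_of_ext_vanishing_general R M N res hext
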